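/- arXiv:0705.3868 — 4 statements merged into one kernel-verified Lean document; each statement's English description precedes it below -/
import Mathlib

section
/- Let $g, l, h > 0$ and $e_3 = (0,0,1) \in \mathbb{R}^3$. Let $q_k, \omega_k \in \mathbb{R}^3$ satisfy $\|q_k\| = 1$ and $\omega_k \cdot q_k = 0$, set $a = h\omega_k + \frac{h^2 g}{2l}\, q_k \times e_3$, assume $\|a\| \le 1$, and define $q_{k+1} = a \times q_k + \sqrt{1 - \|a\|^2}\; q_k$. Then $\|q_{k+1}\| = 1$; that is, the variational integrator on $\S^2$ exactly preserves the unit length of $q_k$. -/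
/-!
Since `a × q ⊥ q`, Lagrange's identity gives
`‖a × q + s q‖² = ‖a‖² ‖q‖² - (a ⬝ q)² + s² ‖q‖²`.
The gravity term `q × e₃` and the angular velocity `ω` are both orthogonal to `q`, so
`a ⬝ q = 0`, and with `‖q‖ = 1` and `s² = 1 - ‖a‖²` the right-hand side is `1`.
-/

open Matrix

noncomputable def cross3 (u v : Fin 3 → ℝ) : Fin 3 → ℝ := crossProduct u v

noncomputable def enorm3 (u : Fin 3 → ℝ) : ℝ := Real.sqrt (u ⬝ᵥ u)

def e3 : Fin 3 → ℝ := ![0, 0, 1]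

theorem dotProduct_self_cross_add_smul {R : Type*} [CommRing R] (a q : Fin 3 → R) (s : R) :
    (a ⨯₃ q + s • q) ⬝ᵥ (a ⨯₃ q + s • q)
      = (a ⬝ᵥ a) * (q ⬝ᵥ q) - (a ⬝ᵥ q) ^ 2 + s ^ 2 * (q ⬝ᵥ q) := by
  have hqa : q ⬝ᵥ a ⨯₃ q = 0 := dot_cross_self a q
  have haq : a ⨯₃ q ⬝ᵥ q = 0 := by rw [dotProduct_comm, hqa]
  simp only [add_dotProduct, dotProduct_add, smul_dotProduct, dotProduct_smul, smul_eq_mul,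
    cross_dot_cross, hqa, haq, dotProduct_comm q a]
  ring

theorem enorm3_sq (u : Fin 3 → ℝ) : enorm3 u ^ 2 = u ⬝ᵥ u :=
  Real.sq_sqrt (by simpa using dotProduct_star_self_nonneg u)

theorem enorm3_cross_add_sqrt_smul_eq_one {a q : Fin 3 → ℝ} (hq : enorm3 q = 1)
    (haq : a ⬝ᵥ q = 0) (hle : enorm3 a ≤ 1) :
    enorm3 (cross3 a q + Real.sqrt (1 - enorm3 a ^ 2) • q) = 1 := by
  have hqq : q ⬝ᵥ q = 1 := by rw [← enorm3_sq, hq, one_pow]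
  have hs : Real.sqrt (1 - enorm3 a ^ 2) ^ 2 = 1 - a ⬝ᵥ a := by
    have ha_nonneg : 0 ≤ enorm3 a := Real.sqrt_nonneg _
    rw [Real.sq_sqrt (sub_nonneg.2 (pow_le_one₀ ha_nonneg hle)), enorm3_sq]
  rw [enorm3, cross3, dotProduct_self_cross_add_smul, hqq, haq, hs]
  norm_num

theorem spherical_pendulum_integrator_preserves_unit_length_general
    (g l h : ℝ)
    (qk ωk : Fin 3 → ℝ) (hq : enorm3 qk = 1) (hqω : ωk ⬝ᵥ qk = 0)
    (a : Fin 3 → ℝ) (ha : a = h • ωk + (h ^ 2 * g / (2 * l)) • cross3 qk e3)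
    (hle : enorm3 a ≤ 1) :
    enorm3 (cross3 a qk + Real.sqrt (1 - enorm3 a ^ 2) • qk) = 1 := by
  have haq : a ⬝ᵥ qk = 0 := by
    rw [ha, add_dotProduct, smul_dotProduct, smul_dotProduct, hqω, cross3, dotProduct_comm,
      dot_self_cross]
    simp
  exact enorm3_cross_add_sqrt_smul_eq_one hq haq hle

/-- The discrete position update of the variational integrator for the spherical
pendulum, `q_{k+1} = a × q_k + √(1 - ‖a‖²) q_k` with
`a = h ω_k + (h²g/2l) q_k × e₃`, exactly preserves the unit length of `q_k`. -/
theorem spherical_pendulum_integrator_preserves_unit_length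
    (g l h : ℝ) (hg : 0 < g) (hl : 0 < l) (hh : 0 < h)
    (qk ωk : Fin 3 → ℝ) (hq : enorm3 qk = 1) (hqω : ωk ⬝ᵥ qk = 0)
    (a : Fin 3 → ℝ) (ha : a = h • ωk + (h ^ 2 * g / (2 * l)) • cross3 qk e3)
    (hle : enorm3 a ≤ 1) :
    enorm3 (cross3 a qk + Real.sqrt (1 - enorm3 a ^ 2) • qk) = 1 :=
  spherical_pendulum_integrator_preserves_unit_length_general g l h qk ωk hq hqω a ha hle
end

section
/- Let $g, l, h > 0$ and $e_3 = (0,0,1) \in \mathbb{R}^3$. Let $q_k, \omega_k \in \mathbb{R}^3$ satisfy $\|q_k\| = 1$ and $\omega_k \cdot q_k = 0$, set $a = h\omega_k + \frac{h^2 g}{2l}\, q_k \times e_3$, assume $\|a\| \le 1$, and define $q_{k+1} = a \times q_k + \sqrt{1 - \|a\|^2}\; q_k$ and $\omega_{k+1} = \omega_k + \frac{hg}{2l}\, q_k \times e_3 + \frac{hg}{2l}\, q_{k+1} \times e_3$. Then $q_{k+1} \cdot \omega_{k+1} = 0$; that is, the variational integrator on $\S^2$ exactly preserves the orthogonality constraint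 between position and angular velocity. -/
open Matrix

/-
Both `ω_k` and `q_k × e₃` are orthogonal to `q_k`, hence so is `a`, and then
`q_{k+1} = a × q_k + s q_k` is orthogonal to `a`. Moreover `h ω_{k+1} = a + (h²g/2l) q_{k+1} × e₃`,
a sum of two vectors orthogonal to `q_{k+1}`; dividing by `h ≠ 0` gives the claim.
-/

section CrossProduct

variable {R : Type*} [CommRing R]

theorem cross_add_smul_dotProduct_eq_zero {a q : Fin 3 → R} (s : R) (hqa : q ⬝ᵥ a = 0) :
    (a ⨯₃ q + s • q) ⬝ᵥ a = 0 := by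
  rw [add_dotProduct, smul_dotProduct, dotProduct_comm, dot_self_cross, hqa, smul_zero, add_zero]

theorem dotProduct_add_smul_cross_eq_zero {p a : Fin 3 → R} (t : R) (v : Fin 3 → R)
    (hpa : p ⬝ᵥ a = 0) : p ⬝ᵥ (a + t • p ⨯₃ v) = 0 := by
  rw [dotProduct_add, dotProduct_smul, dot_self_cross, hpa, smul_zero, add_zero]

end CrossProduct

theorem spherical_pendulum_integrator_preserves_orthogonality_general
    (g l h : ℝ) (hh : 0 < h)
    (qk ωk : Fin 3 → ℝ) (hqω : ωk ⬝ᵥ qk = 0)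
    (a : Fin 3 → ℝ) (ha : a = h • ωk + (h ^ 2 * g / (2 * l)) • cross3 qk e3)
    (qk1 : Fin 3 → ℝ) (hqk1 : qk1 = cross3 a qk + Real.sqrt (1 - enorm3 a ^ 2) • qk)
    (ωk1 : Fin 3 → ℝ)
    (hωk1 : ωk1 = ωk + (h * g / (2 * l)) • cross3 qk e3 + (h * g / (2 * l)) • cross3 qk1 e3) :
    qk1 ⬝ᵥ ωk1 = 0 := by
  have hqa : qk ⬝ᵥ a = 0 := by
    rw [ha]
    exact dotProduct_add_smul_cross_eq_zero _ _ (by rw [dotProduct_smul, dotProduct_comm, hqω,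
      smul_zero])
  have hq1a : qk1 ⬝ᵥ a = 0 := hqk1 ▸ cross_add_smul_dotProduct_eq_zero _ hqa
  have hωa : h • ωk1 = a + (h ^ 2 * g / (2 * l)) • qk1 ⨯₃ e3 := by
    have hc : h * (h * g / (2 * l)) = h ^ 2 * g / (2 * l) := by ring
    rw [hωk1, ha]
    simp only [smul_add, smul_smul, hc]
    rfl
  have hscaled : h • (qk1 ⬝ᵥ ωk1) = 0 := by
    rw [← dotProduct_smul, hωa]
    exact dotProduct_add_smul_cross_eq_zero _ _ hq1a
  exact (smul_eq_zero.mp hscaled).resolve_left hh.ne'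

/-- The variational integrator for the spherical pendulum, with updates
`q_{k+1} = a × q_k + √(1 - ‖a‖²) q_k` (`a = h ω_k + (h²g/2l) q_k × e₃`) and
`ω_{k+1} = ω_k + (hg/2l) q_k × e₃ + (hg/2l) q_{k+1} × e₃`, exactly preserves
the orthogonality constraint: `q_{k+1} · ω_{k+1} = 0`. -/
theorem spherical_pendulum_integrator_preserves_orthogonality
    (g l h : ℝ) (hg : 0 < g) (hl : 0 < l) (hh : 0 < h)
    (qk ωk : Fin 3 → ℝ) (hq : enorm3 qk = 1) (hqω : ωk ⬝ᵥ qk = 0)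
    (a : Fin 3 → ℝ) (ha : a = h • ωk + (h ^ 2 * g / (2 * l)) • cross3 qk e3)
    (hle : enorm3 a ≤ 1)
    (qk1 : Fin 3 → ℝ) (hqk1 : qk1 = cross3 a qk + Real.sqrt (1 - enorm3 a ^ 2) • qk)
    (ωk1 : Fin 3 → ℝ)
    (hωk1 : ωk1 = ωk + (h * g / (2 * l)) • cross3 qk e3 + (h * g / (2 * l)) • cross3 qk1 e3) :
    qk1 ⬝ᵥ ωk1 = 0 :=
  spherical_pendulum_integrator_preserves_orthogonality_general g l h hh qk ωk hqω a ha qk1 hqk1 ωk1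
    hωk1
end

section
/- Let $\alpha, \gamma, \kappa \in \mathbb{R}$, $h > 0$, and let $\beta, V : \mathbb{R} \to \mathbb{R}$ be continuously differentiable. Define the discrete Lagrangian $L_d(q_k, q_{k+1}) = h\,\big[\frac{1}{2}\big(\alpha(\Delta\theta_k/h)^2 + 2\beta(\theta_{k+1/2})(\Delta\theta_k/h)(\Delta s_k/h) + \gamma(\Delta s_k/h)^2\big) - V(\theta_{k+1/2})\big]$ with $q_k = (\theta_k, s_k)$, $\theta_{k+1/2} = (\theta_k+\theta_{k+1})/2$, $\Delta\theta_k = \theta_{k+1}-\theta_k$, $\Delta s_k = s_{k+1}-s_k$, and set $\tau = \kappa\beta$ and $u_k = -\frac{\gamma\,\Delta\theta_k\, \tau(\theta_{k+1/2}) - \gamma\,\Delta\theta_{k-1}\,\tau(\theta_{k-1/2})}{h}$. Then for any sequence $(q_k)$, the forced discrete equation $\frac{\partial L_d(q_k, q_{k+1})}{\partial s_k} + \frac{\partial L_d(q_{k-1}, q_k)}{\partial s_k} = -u_k$ holds if and only if the discrete controlled momentum $p_k = \frac{(1+\gamma\kappa)\beta(\theta_{k+1/2})\Delta\theta_k + \gamma\Delta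 s_k}{h}$ satisfies $p_k = p_{k-1}$. -/
/-- The cart-pendulum Lagrangian `L(θ, θ̇, ṡ) = ½[αθ̇² + 2β(θ)θ̇ṡ + γṡ²] - V(θ)`. -/
noncomputable def Lcp (α γ : ℝ) (β V : ℝ → ℝ) (θ θd sd : ℝ) : ℝ :=
  1 / 2 * (α * θd ^ 2 + 2 * β θ * θd * sd + γ * sd ^ 2) - V θ

/-- The second-order accurate discrete Lagrangian
`L_d(q_k, q_{k+1}) = h L(θ_{k+1/2}, Δθ_k/h, Δs_k/h)`, where `q = (θ, s)`. -/
noncomputable def Ldcp (α γ h : ℝ) (β V : ℝ → ℝ) (qk qk1 : ℝ × ℝ) : ℝ :=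
  h * Lcp α γ β V ((qk.1 + qk1.1) / 2) ((qk1.1 - qk.1) / h) ((qk1.2 - qk.2) / h)

/-- `∂L/∂ṡ` at the midpoint and difference quotients of `(q, q')`. -/
noncomputable def cartMomentum (γ h : ℝ) (β : ℝ → ℝ) (q q' : ℝ × ℝ) : ℝ :=
  (β ((q.1 + q'.1) / 2) * (q'.1 - q.1) + γ * (q'.2 - q.2)) / h

theorem hasDerivAt_Lcp_sd (α γ : ℝ) (β V : ℝ → ℝ) (θ θd sd : ℝ) :
    HasDerivAt (fun v => Lcp α γ β V θ θd v) (β θ * θd + γ * sd) sd := by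
  have hlin := ((hasDerivAt_id sd).const_mul (2 * β θ * θd)).const_add (α * θd ^ 2)
  have hquad := (hasDerivAt_pow 2 sd).const_mul γ
  refine (((hlin.add hquad).const_mul (1 / 2 : ℝ)).sub_const (V θ)).congr_deriv ?_
  norm_num
  ring

/-- The `1/h` from the chain rule cancels the prefactor `h`; for `h = 0` both sides are `0`. -/
theorem hasDerivAt_Ldcp_snd_right (α γ h : ℝ) (β V : ℝ → ℝ) (q : ℝ × ℝ) (θ s : ℝ) :
    HasDerivAt (fun y => Ldcp α γ h β V q (θ, y)) (cartMomentum γ h β q (θ, s)) s := by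
  have hquot : HasDerivAt (fun y => (y - q.2) / h) (1 / h) s := by
    simpa using ((hasDerivAt_id s).sub_const q.2).div_const h
  have hcomp := ((hasDerivAt_Lcp_sd α γ β V ((q.1 + θ) / 2) ((θ - q.1) / h)
    ((s - q.2) / h)).comp s hquot).const_mul h
  refine hcomp.congr_deriv ?_
  rcases eq_or_ne h 0 with rfl | hh
  · simp [cartMomentum]
  · simp only [cartMomentum]
    field_simp

theorem hasDerivAt_Ldcp_snd_left (α γ h : ℝ) (β V : ℝ → ℝ) (q : ℝ × ℝ) (θ s : ℝ) :
    HasDerivAt (fun x => Ldcp α γ h β V (θ, x) q) (-cartMomentum γ h β (θ, s) q) s := by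
  have hquot : HasDerivAt (fun x => (q.2 - x) / h) (-1 / h) s := by
    simpa using ((hasDerivAt_id s).const_sub q.2).div_const h
  have hcomp := ((hasDerivAt_Lcp_sd α γ β V ((θ + q.1) / 2) ((q.1 - θ) / h)
    ((q.2 - s) / h)).comp s hquot).const_mul h
  refine hcomp.congr_deriv ?_
  rcases eq_or_ne h 0 with rfl | hh
  · simp [cartMomentum]
  · simp only [cartMomentum]
    field_simp

theorem discrete_kinetic_shaping_momentum_conservation_general
    (α γ κ h : ℝ)
    (β V : ℝ → ℝ) :
    ∀ q : ℕ → ℝ × ℝ, ∀ k : ℕ, 1 ≤ k →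
      (deriv (fun x => Ldcp α γ h β V ((q k).1, x) (q (k + 1))) (q k).2
          + deriv (fun y => Ldcp α γ h β V (q (k - 1)) ((q k).1, y)) (q k).2
        = -(-(γ * ((q (k + 1)).1 - (q k).1) * (κ * β (((q k).1 + (q (k + 1)).1) / 2))
              - γ * ((q k).1 - (q (k - 1)).1) * (κ * β (((q (k - 1)).1 + (q k).1) / 2))) / h)
      ↔ ((1 + γ * κ) * β (((q k).1 + (q (k + 1)).1) / 2) * ((q (k + 1)).1 - (q k).1)
            + γ * ((q (k + 1)).2 - (q k).2)) / h
          = ((1 + γ * κ) * β (((q (k - 1)).1 + (q k).1) / 2) * ((q k).1 - (q (k - 1)).1)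
            + γ * ((q k).2 - (q (k - 1)).2)) / h) := by
  intro q k _
  rw [(hasDerivAt_Ldcp_snd_left α γ h β V (q (k + 1)) (q k).1 (q k).2).deriv,
    (hasDerivAt_Ldcp_snd_right α γ h β V (q (k - 1)) (q k).1 (q k).2).deriv]
  simp only [cartMomentum]
  -- the controlled momentum is the cart momentum plus the shaping term `γ Δθ τ(θ_mid) / h`
  constructor <;> intro H <;> linear_combination -H

/-- With the discrete kinetic-shaping feedback
`u_k = -(γ Δθ_k τ(θ_{k+1/2}) - γ Δθ_{k-1} τ(θ_{k-1/2}))/h`, `τ = κβ`, the forced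
discrete `s`-equation `∂L_d(q_k,q_{k+1})/∂s_k + ∂L_d(q_{k-1},q_k)/∂s_k = -u_k`
holds if and only if the discrete controlled momentum
`p_k = ((1+γκ)β(θ_{k+1/2})Δθ_k + γΔs_k)/h` satisfies `p_k = p_{k-1}`. -/
theorem discrete_kinetic_shaping_momentum_conservation
    (α γ κ h : ℝ) (hh : 0 < h)
    (β V : ℝ → ℝ) (hβ : ContDiff ℝ 1 β) (hV : ContDiff ℝ 1 V) :
    ∀ q : ℕ → ℝ × ℝ, ∀ k : ℕ, 1 ≤ k →
      (deriv (fun x => Ldcp α γ h β V ((q k).1, x) (q (k + 1))) (q k).2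
          + deriv (fun y => Ldcp α γ h β V (q (k - 1)) ((q k).1, y)) (q k).2
        = -(-(γ * ((q (k + 1)).1 - (q k).1) * (κ * β (((q k).1 + (q (k + 1)).1) / 2))
              - γ * ((q k).1 - (q (k - 1)).1) * (κ * β (((q (k - 1)).1 + (q k).1) / 2))) / h)
      ↔ ((1 + γ * κ) * β (((q k).1 + (q (k + 1)).1) / 2) * ((q (k + 1)).1 - (q k).1)
            + γ * ((q (k + 1)).2 - (q k).2)) / h
          = ((1 + γ * κ) * β (((q (k - 1)).1 + (q k).1) / 2) * ((q k).1 - (q (k - 1)).1)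
            + γ * ((q k).2 - (q (k - 1)).2)) / h) :=
  discrete_kinetic_shaping_momentum_conservation_general α γ κ h β V
end

section
/- Let $n \ge 1$, let $L_d : \mathbb{R}^n \times \mathbb{R}^n \to \mathbb{R}$ be continuously differentiable, and let $v \in \mathbb{R}^n$ be such that $L_d(q + c v, q' + c v) = L_d(q, q')$ for all $q, q' \in \mathbb{R}^n$ and all $c \in \mathbb{R}$ (translation invariance in the direction $v$). If a sequence $(q_k)_{k=0}^N$ satisfies the discrete Euler--Lagrange equations $D_2 L_d(q_{k-1}, q_k) + D_1 L_d(q_k, q_{k+1}) = 0$ for $k = 1, \dots, N-1$, then the discrete momentum $J_k := D_2 L_d(q_{k-1}, q_k) \cdot v$ is constant in $k$ for $k = 1, \dots, N$; that is, the variational integrator preserves the momentum map associated with the translational symmetry (discrete Noether's theorem). -/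
/-- `D1 L a b` is the partial derivative of `L : ℝⁿ × ℝⁿ → ℝ` with respect to its
first argument, evaluated at `(a, b)`. -/
noncomputable def D1 {n : ℕ} (L : (Fin n → ℝ) × (Fin n → ℝ) → ℝ) (a b : Fin n → ℝ) :
    (Fin n → ℝ) →L[ℝ] ℝ :=
  fderiv ℝ (fun x => L (x, b)) a

/-- `D2 L a b` is the partial derivative of `L : ℝⁿ × ℝⁿ → ℝ` with respect to its
second argument, evaluated at `(a, b)`. -/
noncomputable def D2 {n : ℕ} (L : (Fin n → ℝ) × (Fin n → ℝ) → ℝ) (a b : Fin n → ℝ) :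
    (Fin n → ℝ) →L[ℝ] ℝ :=
  fderiv ℝ (fun y => L (a, y)) b

/-!
Invariance of `L_d` under the diagonal translation `(a, b) ↦ (a + c v, b + c v)` makes the
derivative of `L_d` vanish in the direction `(v, v)`, i.e. `D₁L_d(a, b) v + D₂L_d(a, b) v = 0`.
Applied at `(q_k, q_{k+1})` and combined with the discrete Euler–Lagrange equation at `k`, this
gives `D₂L_d(q_k, q_{k+1}) v = -D₁L_d(q_k, q_{k+1}) v = D₂L_d(q_{k-1}, q_k) v`.
-/

theorem fderiv_apply_eq_zero_of_forall_add_smul_eq {𝕜 E F : Type*} [NontriviallyNormedField 𝕜]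
    [NormedAddCommGroup E] [NormedSpace 𝕜 E] [NormedAddCommGroup F] [NormedSpace 𝕜 F]
    {f : E → F} {x w : E} (hf : DifferentiableAt 𝕜 f x) (hinv : ∀ c : 𝕜, f (x + c • w) = f x) :
    fderiv 𝕜 f x w = 0 := by
  have hline : HasLineDerivAt 𝕜 f (fderiv 𝕜 f x w) x w := hf.hasFDerivAt.hasLineDerivAt w
  have hconst : HasLineDerivAt 𝕜 f 0 x w := by
    simpa only [HasLineDerivAt, hinv] using hasDerivAt_const (0 : 𝕜) (f x)
  exact hline.unique hconst

theorem D1_apply_add_D2_apply {n : ℕ} {L : (Fin n → ℝ) × (Fin n → ℝ) → ℝ} {a b : Fin n → ℝ}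
    (hL : DifferentiableAt ℝ L (a, b)) (x y : Fin n → ℝ) :
    D1 L a b x + D2 L a b y = fderiv ℝ L (a, b) (x, y) := by
  have h1 : D1 L a b = (fderiv ℝ L (a, b)).comp (.inl ℝ _ _) :=
    (hL.hasFDerivAt.comp a (hasFDerivAt_prodMk_left a b)).fderiv
  have h2 : D2 L a b = (fderiv ℝ L (a, b)).comp (.inr ℝ _ _) :=
    (hL.hasFDerivAt.comp b (hasFDerivAt_prodMk_right a b)).fderiv
  rw [h1, h2, ContinuousLinearMap.comp_apply, ContinuousLinearMap.comp_apply, ← map_add]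
  simp

theorem D1_apply_add_D2_apply_eq_zero_of_translation_invariant {n : ℕ}
    {L : (Fin n → ℝ) × (Fin n → ℝ) → ℝ} {v : Fin n → ℝ}
    (hinv : ∀ (a b : Fin n → ℝ) (c : ℝ), L (a + c • v, b + c • v) = L (a, b))
    {a b : Fin n → ℝ} (hL : DifferentiableAt ℝ L (a, b)) :
    D1 L a b v + D2 L a b v = 0 := by
  rw [D1_apply_add_D2_apply hL]
  exact fderiv_apply_eq_zero_of_forall_add_smul_eq hL fun c => hinv a b c

theorem discrete_noether_translation_general
    (n N : ℕ)
    (Ld : (Fin n → ℝ) × (Fin n → ℝ) → ℝ) (hLd : ContDiff ℝ 1 Ld)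
    (v : Fin n → ℝ)
    (hinv : ∀ (a b : Fin n → ℝ) (c : ℝ), Ld (a + c • v, b + c • v) = Ld (a, b))
    (q : ℕ → (Fin n → ℝ))
    (hDEL : ∀ k, 1 ≤ k → k ≤ N - 1 →
      D2 Ld (q (k - 1)) (q k) + D1 Ld (q k) (q (k + 1)) = 0) :
    ∀ k, 1 ≤ k → k ≤ N →
      D2 Ld (q (k - 1)) (q k) v = D2 Ld (q 0) (q 1) v := by
  have hstep : ∀ k, 1 ≤ k → k < N →
      D2 Ld (q k) (q (k + 1)) v = D2 Ld (q (k - 1)) (q k) v := by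
    intro k hk hkN
    have hEL : D2 Ld (q (k - 1)) (q k) v + D1 Ld (q k) (q (k + 1)) v = 0 := by
      simpa using congrArg (· v) (hDEL k hk (by omega))
    have hsym := D1_apply_add_D2_apply_eq_zero_of_translation_invariant hinv
      ((hLd.differentiable one_ne_zero) (q k, q (k + 1)))
    linarith
  intro k hk
  induction k, hk using Nat.le_induction with
  | base => simp
  | succ k hk ih =>
    intro hkN
    rw [Nat.add_sub_cancel, hstep k hk hkN]
    exact ih (by omega)

/-- Discrete Noether's theorem for a translational symmetry: if the discrete
Lagrangian is invariant under translations in the direction `v` and the sequence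
`(q_k)` satisfies the discrete Euler–Lagrange equations, then the discrete
momentum `J_k = D₂L_d(q_{k-1}, q_k) ⋅ v` is constant in `k` for `k = 1, …, N`. -/
theorem discrete_noether_translation
    (n N : ℕ) (hn : 1 ≤ n)
    (Ld : (Fin n → ℝ) × (Fin n → ℝ) → ℝ) (hLd : ContDiff ℝ 1 Ld)
    (v : Fin n → ℝ)
    (hinv : ∀ (a b : Fin n → ℝ) (c : ℝ), Ld (a + c • v, b + c • v) = Ld (a, b))
    (q : ℕ → (Fin n → ℝ))
    (hDEL : ∀ k, 1 ≤ k → k ≤ N - 1 →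
      D2 Ld (q (k - 1)) (q k) + D1 Ld (q k) (q (k + 1)) = 0) :
    ∀ k, 1 ≤ k → k ≤ N →
      D2 Ld (q (k - 1)) (q k) v = D2 Ld (q 0) (q 1) v :=
  discrete_noether_translation_general n N Ld hLd v hinv q hDEL
end
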